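/- arXiv:2403.00651 — 2 statements merged into one kernel-verified Lean document; each statement's English description precedes it below -/
import Mathlib

section
/- Let q > 0 and let ρ = √(|∇h|² + h²) for a smooth function h < 0 on Ω ⊂ Sⁿ⁻¹ with ∇²h + hI > 0 and h = 0 on ∂Ω. Then V_q(h) := (1/q)∫_Ω ρ^{q−n}(−h)det(∇²h + hI) dx ≥ (C/q)·‖h‖_{C⁰(Ω)}^q, where C > 0 depends only on Ω and n, using that min_Ω ρ ≥ ‖h‖_{C⁰(Ω)} (equivalently −min h_C = min ρ_C for support/radial functions of C-close sets) and ∫_Ω ρ^{−n}(−h)det(∇²h + hI) dx is a constant independent of h. -/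
/-! Since `ρ ≥ ‖h‖_{C⁰}` pointwise, `ρ^{q-n} = ρ^q ρ^{-n} ≥ ‖h‖_{C⁰}^q ρ^{-n}`; integrating against the
nonnegative density `(-h) det(∇²h + hI)` bounds `q V_q(h)` below by `‖h‖_{C⁰}^q` times the
`h`-independent integral `∫ ρ^{-n}(-h) det(∇²h + hI)`. -/

open MeasureTheory

theorem Real.rpow_mul_rpow_le_rpow_add {M r q p : ℝ} (hM : 0 ≤ M) (hMr : M ≤ r) (hr : 0 < r)
    (hq : 0 ≤ q) : M ^ q * r ^ p ≤ r ^ (q + p) := by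
  rw [Real.rpow_add hr]
  gcongr

theorem MeasureTheory.rpow_mul_integral_le_integral_rpow_add_mul {α : Type*} [MeasurableSpace α]
    {μ : Measure α} {ρ w : α → ℝ} {M q p : ℝ} (hM : 0 ≤ M) (hq : 0 ≤ q)
    (hρ : ∀ x, 0 < ρ x) (hMρ : ∀ x, M ≤ ρ x) (hw : ∀ x, 0 ≤ w x)
    (hp : Integrable (fun x => ρ x ^ p * w x) μ)
    (hqp : Integrable (fun x => ρ x ^ (q + p) * w x) μ) :
    M ^ q * ∫ x, ρ x ^ p * w x ∂μ ≤ ∫ x, ρ x ^ (q + p) * w x ∂μ := by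
  rw [← integral_const_mul]
  refine integral_mono (hp.const_mul _) hqp fun x => ?_
  rw [← mul_assoc]
  exact mul_le_mul_of_nonneg_right (Real.rpow_mul_rpow_le_rpow_add hM (hMρ x) (hρ x) hq) (hw x)

theorem stmt_14_general {α : Type*} [MeasurableSpace α] (μ : Measure α)
    (q : ℝ) (hq : 0 < q) (n : ℕ)
    (h ρ Φ : α → ℝ) (M C₀ : ℝ) (hM : 0 ≤ M)
    (hρpos : ∀ x, 0 < ρ x)
    (hρM : ∀ x, M ≤ ρ x)
    (hΦ : ∀ x, 0 ≤ -h x * Φ x)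
    (hint1 : Integrable (fun x => ρ x ^ (q - (n : ℝ)) * (-h x) * Φ x) μ)
    (hint0 : Integrable (fun x => ρ x ^ (-(n : ℝ)) * (-h x) * Φ x) μ)
    (hc : C₀ ≤ ∫ x, ρ x ^ (-(n : ℝ)) * (-h x) * Φ x ∂μ) :
    C₀ / q * M ^ q ≤ (1 / q) * ∫ x, ρ x ^ (q - (n : ℝ)) * (-h x) * Φ x ∂μ := by
  have hV := rpow_mul_integral_le_integral_rpow_add_mul (μ := μ) (w := fun x => -h x * Φ x)
    (p := -(n : ℝ)) hM hq.le hρpos hρM hΦ (by simpa only [mul_assoc] using hint0)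
    (by simpa only [← sub_eq_add_neg, mul_assoc] using hint1)
  simp only [← sub_eq_add_neg, ← mul_assoc] at hV
  calc C₀ / q * M ^ q = 1 / q * (M ^ q * C₀) := by ring
    _ ≤ 1 / q * (M ^ q * ∫ x, ρ x ^ (-(n : ℝ)) * (-h x) * Φ x ∂μ) := by gcongr
    _ ≤ 1 / q * ∫ x, ρ x ^ (q - (n : ℝ)) * (-h x) * Φ x ∂μ := by gcongr

/-- Sobolev-type inequality for the `q`-volume functional
`V_q(h) = (1/q)∫ ρ^{q−n}(−h)·det(∇²h+hI)`, abstracted over the domain `Ω`: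
here `Φ = det(∇²h+hI) ≥ 0` (so `(−h)Φ ≥ 0`), `M = ‖h‖_{C⁰}` satisfies
`min ρ ≥ M` (the relation `−min h_C = min ρ_C`), and
`∫ ρ^{−n}(−h)Φ ≥ C₀` is the constant independent of `h`.  Then
`V_q(h) ≥ (C₀/q)·‖h‖_{C⁰}^q`. -/
theorem stmt_14 {α : Type*} [MeasurableSpace α] (μ : Measure α)
    (q : ℝ) (hq : 0 < q) (n : ℕ)
    (h ρ Φ : α → ℝ) (M C₀ : ℝ) (hM : 0 ≤ M) (hC₀ : 0 < C₀)
    (hρpos : ∀ x, 0 < ρ x)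
    (hhM : ∀ x, |h x| ≤ M)
    (hρM : ∀ x, M ≤ ρ x)
    (hΦ : ∀ x, 0 ≤ -h x * Φ x)
    (hint1 : Integrable (fun x => ρ x ^ (q - (n : ℝ)) * (-h x) * Φ x) μ)
    (hint0 : Integrable (fun x => ρ x ^ (-(n : ℝ)) * (-h x) * Φ x) μ)
    (hc : C₀ ≤ ∫ x, ρ x ^ (-(n : ℝ)) * (-h x) * Φ x ∂μ) :
    C₀ / q * M ^ q ≤ (1 / q) * ∫ x, ρ x ^ (q - (n : ℝ)) * (-h x) * Φ x ∂μ :=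
  stmt_14_general μ q hq n h ρ Φ M C₀ hM hρpos hρM hΦ hint1 hint0 hc
end

section
/- Let 0 < a < 1, b > 0, C > 0 and w(x′, x_{n−1}) = C x_{n−1} − C x_{n−1}^a (1 − |x′|²)^b on {|x′| < 1, x_{n−1} > 0}. Then with r = |x′|, the Hessian determinant of w equals det(D²w) = 2^{n−2} C^{n−1} a b^{n−2} x_{n−1}^{a(n−1)−2} (1−r²)^{(b−1)(n−1)} (1 − a + (1 − 2b − a) r²). -/
/-!
Write `x = (x', t)` with `t = x_{i₀}` and `r² = |x'|²`, and `e` for the unit vector of the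
`t`-axis. Since `w` depends on `x'` only through `r²`, its Hessian has the form
`α I + β x' x'ᵀ + γ (x' eᵀ + e x'ᵀ) + δ e eᵀ`, a rank-two perturbation of a multiple of the
identity. By the Weinstein–Aronszajn identity `det (α I + A B) = α ^ (m - 2) det (α I + B A)`
for `A : m × 2`, `B : 2 × m`, the determinant is `α ^ (m - 2)` times a `2 × 2` determinant: this
is the paper's `(w_r / r) ^ (n - 3) (w_tt w_rr - w_tr²)`.
-/

/-- The determinant of the Hessian matrix of `u` at `x`. -/
noncomputable def hessianDet {m : ℕ} (u : EuclideanSpace ℝ (Fin m) → ℝ)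
    (x : EuclideanSpace ℝ (Fin m)) : ℝ :=
  (Matrix.of fun i j : Fin m =>
    fderiv ℝ (fun y => fderiv ℝ u y (EuclideanSpace.single i 1)) x
      (EuclideanSpace.single j 1)).det

namespace Matrix

variable {K : Type*} [Field K] {m n : Type*} [Fintype m] [Fintype n] [DecidableEq m]
  [DecidableEq n]

theorem pow_card_mul_det_smul_one_add_mul_comm {α : K} (hα : α ≠ 0) (A : Matrix m n K)
    (B : Matrix n m K) :
    α ^ Fintype.card n * det (α • 1 + A * B) = α ^ Fintype.card m * det (α • 1 + B * A) := by
  have hAB : α • 1 + A * B = α • (1 + A * (α⁻¹ • B)) := by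
    rw [Matrix.mul_smul, smul_add, smul_smul, mul_inv_cancel₀ hα, one_smul]
  have hBA : α • 1 + B * A = α • (1 + (α⁻¹ • B) * A) := by
    rw [Matrix.smul_mul, smul_add, smul_smul, mul_inv_cancel₀ hα, one_smul]
  rw [hAB, hBA, det_smul, det_smul, det_one_add_mul_comm]
  ring

theorem sq_mul_det_smul_one_add_rankTwo {α : K} (hα : α ≠ 0) (β γ δ : K) {v e : m → K}
    (hee : e ⬝ᵥ e = 1) (hve : v ⬝ᵥ e = 0) :
    α ^ 2 * det (α • 1 + (β • vecMulVec v v + γ • (vecMulVec v e + vecMulVec e v) +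
        δ • vecMulVec e e)) =
      α ^ Fintype.card m * ((α + β * (v ⬝ᵥ v)) * (α + δ) - γ ^ 2 * (v ⬝ᵥ v)) := by
  set U : Matrix (Fin 2) m K := of ![v, e]
  set W : Matrix (Fin 2) m K := of ![β • v + γ • e, γ • v + δ • e]
  have hUW : β • vecMulVec v v + γ • (vecMulVec v e + vecMulVec e v) + δ • vecMulVec e e =
      Uᵀ * W := by
    ext i j
    simp only [add_apply, smul_apply, vecMulVec_apply, smul_eq_mul, mul_apply, transpose_apply,
      of_apply, cons_val', cons_val_fin_one, Pi.add_apply, Pi.smul_apply, Fin.sum_univ_two,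
      cons_val_zero, cons_val_one, U, W]
    ring
  have hev : e ⬝ᵥ v = 0 := by rw [dotProduct_comm, hve]
  have hWU : α • 1 + W * Uᵀ = !![α + β * (v ⬝ᵥ v), γ; γ * (v ⬝ᵥ v), α + δ] := by
    ext k l
    rw [add_apply, show (W * Uᵀ) k l = ![β • v + γ • e, γ • v + δ • e] k ⬝ᵥ ![v, e] l from rfl]
    fin_cases k <;> fin_cases l <;> simp [add_dotProduct, hee, hve, hev]
  have hcomm := pow_card_mul_det_smul_one_add_mul_comm hα Uᵀ W
  rw [Fintype.card_fin] at hcomm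
  rw [hUW, hcomm, hWU, det_fin_two_of]
  ring

end Matrix

-- For `m = k + 1` and `α = w_r / r`: `α ^ m` times the `2 × 2` determinant equals `α ^ 2` times
-- the claimed value of `det D²w`.
theorem cylindrical_det_identity {t r : ℝ} (ht : 0 < t) (hr : r < 1) (a b C : ℝ) (k : ℕ) :
    (2 * C * b * (t ^ a * (1 - r) ^ (b - 1))) ^ (k + 1) *
        ((2 * C * b * (t ^ a * (1 - r) ^ (b - 1)) +
              -(4 * C * b * (b - 1)) * (t ^ a * (1 - r) ^ (b - 2)) * r) *
            (-(C * a * (a - 1)) * (t ^ (a - 2) * (1 - r) ^ b)) -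
          (2 * C * a * b * (t ^ (a - 1) * (1 - r) ^ (b - 1))) ^ 2 * r) =
      (2 * C * b * (t ^ a * (1 - r) ^ (b - 1))) ^ 2 *
        (2 ^ k * C ^ (k + 1) * a * b ^ k * t ^ (a * ((k : ℝ) + 1) - 2) *
          (1 - r) ^ ((b - 1) * ((k : ℝ) + 1)) * (1 - a + (1 - 2 * b - a) * r)) := by
  have hs : 0 < 1 - r := sub_pos.2 hr
  have hsub {u : ℝ} (hu : 0 < u) (p : ℝ) (j : ℕ) : u ^ (p - j) = u ^ p / u ^ j := by
    rw [Real.rpow_sub hu, Real.rpow_natCast]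
  -- every real power becomes `t ^ a` or `(1 - r) ^ b` times an integer power of `t` or `1 - r`
  rw [show a * ((k : ℝ) + 1) - 2 = a * ((k + 1 : ℕ) : ℝ) - (2 : ℕ) by push_cast; ring,
    show (b - 1) * ((k : ℝ) + 1) = (b - 1) * ((k + 1 : ℕ) : ℝ) by push_cast; ring,
    hsub ht, Real.rpow_mul_natCast ht.le, Real.rpow_mul_natCast hs.le,
    show a - 2 = a - (2 : ℕ) by norm_num, show b - 2 = b - ((2 : ℕ) : ℝ) by norm_num,
    show a - 1 = a - (1 : ℕ) by norm_num, show b - 1 = b - ((1 : ℕ) : ℝ) by norm_num,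
    hsub ht, hsub hs, hsub ht, hsub hs]
  field_simp
  ring

open Finset

section Cylindrical

variable {m : ℕ} (i₀ : Fin m)

local notation "E" => EuclideanSpace ℝ (Fin m)

noncomputable def radialSq (y : E) : ℝ := ∑ i ∈ univ.erase i₀, y i ^ 2

/-- The vector `x'`: the coordinates of `x` other than `x_{i₀}`, with a zero in slot `i₀`. -/
noncomputable def radialPart (x : E) : Fin m → ℝ := fun j => if j = i₀ then 0 else x j

noncomputable def cylMonomial (p q : ℝ) (y : E) : ℝ := y i₀ ^ p * (1 - radialSq i₀ y) ^ q

noncomputable def supersolution (a b C : ℝ) (y : E) : ℝ := C * y i₀ - C * cylMonomial i₀ a b y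

theorem radialPart_dotProduct_self (x : E) :
    radialPart i₀ x ⬝ᵥ radialPart i₀ x = radialSq i₀ x := by
  simp [radialPart, dotProduct, radialSq, sum_ite, filter_ne', sq]

theorem radialPart_dotProduct_single (x : E) : radialPart i₀ x ⬝ᵥ Pi.single i₀ 1 = 0 := by
  simp [radialPart, dotProduct_single]

theorem hasFDerivAt_radialSq (y : E) :
    HasFDerivAt (radialSq i₀)
      (∑ i ∈ univ.erase i₀, (2 * y i) • EuclideanSpace.proj (𝕜 := ℝ) i) y := by
  refine HasFDerivAt.fun_sum fun i _ => ?_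
  simpa using (PiLp.hasFDerivAt_apply (𝕜 := ℝ) 2 y i).pow 2

variable {i₀}

theorem hasFDerivAt_cylMonomial (p q : ℝ) {y : E} (hy0 : y i₀ ≠ 0)
    (hy1 : radialSq i₀ y ≠ 1) :
    HasFDerivAt (cylMonomial i₀ p q)
      ((y i₀ ^ p) • ((q * (1 - radialSq i₀ y) ^ (q - 1)) •
          -(∑ i ∈ univ.erase i₀, (2 * y i) • EuclideanSpace.proj (𝕜 := ℝ) i)) +
        ((1 - radialSq i₀ y) ^ q) • ((p * y i₀ ^ (p - 1)) • EuclideanSpace.proj (𝕜 := ℝ) i₀)) y :=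
  ((PiLp.hasFDerivAt_apply (𝕜 := ℝ) 2 y i₀).rpow_const (Or.inl hy0)).mul
    (((hasFDerivAt_radialSq i₀ y).const_sub 1).rpow_const (Or.inl (sub_ne_zero.2 hy1.symm)))

theorem fderiv_cylMonomial_apply_single (p q : ℝ) {y : E} (hy0 : y i₀ ≠ 0)
    (hy1 : radialSq i₀ y ≠ 1) (j : Fin m) :
    fderiv ℝ (cylMonomial i₀ p q) y (EuclideanSpace.single j 1) =
      if j = i₀ then p * cylMonomial i₀ (p - 1) q y
      else -(2 * q * y j) * cylMonomial i₀ p (q - 1) y := by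
  rw [(hasFDerivAt_cylMonomial p q hy0 hy1).fderiv]
  simp only [cylMonomial, add_apply, smul_apply, neg_apply, _root_.sum_apply, PiLp.proj_apply,
    PiLp.single_apply, smul_eq_mul, mul_ite, mul_one, mul_zero, sum_ite_eq', mem_erase, mem_univ, and_true]
  split_ifs <;> subst_vars <;> first | contradiction | ring

theorem fderiv_supersolution_apply_single (a b C : ℝ) {y : E} (hy0 : y i₀ ≠ 0)
    (hy1 : radialSq i₀ y ≠ 1) (i : Fin m) :
    fderiv ℝ (supersolution i₀ a b C) y (EuclideanSpace.single i 1) =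
      if i = i₀ then C - C * a * cylMonomial i₀ (a - 1) b y
      else 2 * C * b * y i * cylMonomial i₀ a (b - 1) y := by
  have hM := hasFDerivAt_cylMonomial a b hy0 hy1
  unfold supersolution
  rw [((PiLp.hasFDerivAt_apply (𝕜 := ℝ) 2 y i₀).const_mul C |>.fun_sub
      (hM.const_mul C)).fderiv, sub_apply, smul_apply, smul_apply, ← hM.fderiv,
    fderiv_cylMonomial_apply_single a b hy0 hy1, PiLp.proj_apply, PiLp.single_apply]
  split_ifs <;> subst_vars <;> first | contradiction | ring

theorem hessian_supersolution (a b C : ℝ) {x : E} (hx0 : x i₀ ≠ 0) (hx1 : radialSq i₀ x ≠ 1) :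
    Matrix.of (fun i j : Fin m => fderiv ℝ (fun y => fderiv ℝ (supersolution i₀ a b C) y
        (EuclideanSpace.single i 1)) x (EuclideanSpace.single j 1)) =
      (2 * C * b * cylMonomial i₀ a (b - 1) x) • 1 +
        ((-(4 * C * b * (b - 1)) * cylMonomial i₀ a (b - 2) x) •
            Matrix.vecMulVec (radialPart i₀ x) (radialPart i₀ x) +
          (2 * C * a * b * cylMonomial i₀ (a - 1) (b - 1) x) •
            (Matrix.vecMulVec (radialPart i₀ x) (Pi.single i₀ 1) +
              Matrix.vecMulVec (Pi.single i₀ 1) (radialPart i₀ x)) +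
          (-(C * a * (a - 1)) * cylMonomial i₀ (a - 2) b x -
              2 * C * b * cylMonomial i₀ a (b - 1) x) •
            Matrix.vecMulVec (Pi.single i₀ 1) (Pi.single i₀ 1)) := by
  have hnear : ∀ᶠ y in nhds x, y i₀ ≠ 0 ∧ radialSq i₀ y ≠ 1 :=
    ((PiLp.hasFDerivAt_apply (𝕜 := ℝ) 2 x i₀).continuousAt.eventually_ne hx0).and
      ((hasFDerivAt_radialSq i₀ x).continuousAt.eventually_ne hx1)
  ext i j
  rw [Matrix.of_apply, Filter.EventuallyEq.fderiv_eq
    (hnear.mono fun y hy => fderiv_supersolution_apply_single a b C hy.1 hy.2 i)]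
  have hM := hasFDerivAt_cylMonomial a (b - 1) hx0 hx1
  split_ifs with hi
  on_goal 1 =>
    rw [fderiv_const_sub,
      fderiv_const_mul (hasFDerivAt_cylMonomial _ _ hx0 hx1).differentiableAt, neg_apply,
      smul_apply]
  on_goal 2 =>
    rw [(((PiLp.hasFDerivAt_apply (𝕜 := ℝ) 2 x i).const_mul (2 * C * b)).fun_mul hM).fderiv,
      add_apply, smul_apply, smul_apply, smul_apply, ← hM.fderiv, PiLp.proj_apply,
      PiLp.single_apply]
  all_goals
    rw [fderiv_cylMonomial_apply_single _ _ hx0 hx1]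
    simp only [Matrix.add_apply, Matrix.smul_apply, Matrix.one_apply, Matrix.vecMulVec_apply,
      Pi.single_apply, radialPart, smul_eq_mul, sub_sub, one_add_one_eq_two]
    split_ifs <;> subst_vars <;> first | contradiction | ring

theorem hessianDet_supersolution (a : ℝ) {b C : ℝ} (hb : b ≠ 0) (hC : C ≠ 0) {x : E}
    (hx0 : 0 < x i₀) (hx1 : radialSq i₀ x < 1) :
    hessianDet (supersolution i₀ a b C) x =
      2 ^ (m - 1) * C ^ m * a * b ^ (m - 1) * x i₀ ^ (a * m - 2) *
        (1 - radialSq i₀ x) ^ ((b - 1) * m) * (1 - a + (1 - 2 * b - a) * radialSq i₀ x) := by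
  obtain ⟨k, rfl⟩ : ∃ k, m = k + 1 := Nat.exists_eq_add_one.2 i₀.pos
  have hα : 2 * C * b * cylMonomial i₀ a (b - 1) x ≠ 0 := by
    have := Real.rpow_pos_of_pos hx0 a
    have := Real.rpow_pos_of_pos (sub_pos.2 hx1) (b - 1)
    unfold cylMonomial
    positivity
  have hdet := Matrix.sq_mul_det_smul_one_add_rankTwo hα
    (-(4 * C * b * (b - 1)) * cylMonomial i₀ a (b - 2) x)
    (2 * C * a * b * cylMonomial i₀ (a - 1) (b - 1) x)
    (-(C * a * (a - 1)) * cylMonomial i₀ (a - 2) b x - 2 * C * b * cylMonomial i₀ a (b - 1) x)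
    (by simp) (radialPart_dotProduct_single i₀ x)
  rw [← hessian_supersolution a b C hx0.ne' hx1.ne, radialPart_dotProduct_self,
    add_sub_cancel] at hdet
  apply mul_left_cancel₀ (pow_ne_zero 2 hα)
  rw [hessianDet, hdet, Fintype.card_fin, Nat.add_sub_cancel, Nat.cast_add_one]
  exact cylindrical_det_identity hx0 hx1 a b C k

end Cylindrical

theorem stmt_16_general {n : ℕ} (a b C : ℝ)
    (hb : 0 < b) (hC : 0 < C)
    (i₀ : Fin (n - 1))
    (x : EuclideanSpace ℝ (Fin (n - 1))) (hx : 0 < x i₀)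
    (hr : ∑ i ∈ Finset.univ.erase i₀, (x i) ^ 2 < 1) :
    hessianDet
        (fun y => C * y i₀ -
          C * (y i₀) ^ a * (1 - ∑ i ∈ Finset.univ.erase i₀, (y i) ^ 2) ^ b) x =
      2 ^ (n - 2) * C ^ (n - 1) * a * b ^ (n - 2) *
        (x i₀) ^ (a * ((n : ℝ) - 1) - 2) *
        (1 - ∑ i ∈ Finset.univ.erase i₀, (x i) ^ 2) ^ ((b - 1) * ((n : ℝ) - 1)) *
        (1 - a + (1 - 2 * b - a) * ∑ i ∈ Finset.univ.erase i₀, (x i) ^ 2) := by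
  have hw : (fun y : EuclideanSpace ℝ (Fin (n - 1)) => C * y i₀ -
      C * (y i₀) ^ a * (1 - ∑ i ∈ Finset.univ.erase i₀, (y i) ^ 2) ^ b) =
      supersolution i₀ a b C := by
    funext y
    rw [supersolution, cylMonomial, radialSq, mul_assoc]
  rw [hw, hessianDet_supersolution a hb.ne' hC.ne' hx hr, Nat.sub_sub,
    Nat.cast_sub (by have := i₀.pos; omega : 1 ≤ n), Nat.cast_one]
  rfl

/-- Hessian determinant of the supersolution
`w(x', x_{n-1}) = C x_{n-1} − C x_{n-1}^a (1 − |x'|²)^b`: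
`det(D²w) = 2^{n-2} C^{n-1} a b^{n-2} x_{n-1}^{a(n-1)-2} (1−r²)^{(b−1)(n−1)}
(1 − a + (1 − 2b − a) r²)` with `r = |x'|`. -/
theorem stmt_16 {n : ℕ} (hn : 3 ≤ n) (a b C : ℝ) (ha0 : 0 < a) (ha1 : a < 1)
    (hb : 0 < b) (hC : 0 < C)
    (i₀ : Fin (n - 1)) (hi₀ : (i₀ : ℕ) = n - 2)
    (x : EuclideanSpace ℝ (Fin (n - 1))) (hx : 0 < x i₀)
    (hr : ∑ i ∈ Finset.univ.erase i₀, (x i) ^ 2 < 1) :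
    hessianDet
        (fun y => C * y i₀ -
          C * (y i₀) ^ a * (1 - ∑ i ∈ Finset.univ.erase i₀, (y i) ^ 2) ^ b) x =
      2 ^ (n - 2) * C ^ (n - 1) * a * b ^ (n - 2) *
        (x i₀) ^ (a * ((n : ℝ) - 1) - 2) *
        (1 - ∑ i ∈ Finset.univ.erase i₀, (x i) ^ 2) ^ ((b - 1) * ((n : ℝ) - 1)) *
        (1 - a + (1 - 2 * b - a) * ∑ i ∈ Finset.univ.erase i₀, (x i) ^ 2) :=
  stmt_16_general a b C hb hC i₀ x hx hr
end
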